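/- (Theorem 2, inequality) Assume E y_j ≠ E y_k for all j ≠ k. Then Acc ≤ (1/(n·(m−1)))·Σ_{1 ≤ j < k ≤ m} (|N_j| + |N_k|)·S*_{j,k}; that is, the multiclass classification accuracy is upper-bounded by the weighted average over all unordered label pairs of the pairwise maximum separabilities. -/

import Mathlib

open Finset

/-- The pairwise separability of the hidden states `h` with respect to label tokens
`a, b` along direction `u`:
`S_{a,b}(u) = (1/(|N_a| + |N_b|)) · (|{i ∈ N_a | ⟪u, h i⟫ ≥ 0}| + |{i ∈ N_b | ⟪u, h i⟫ < 0}|)`. -/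
noncomputable def sepPair {d n : ℕ} {V : Type*} [DecidableEq V]
    (h : Fin n → EuclideanSpace ℝ (Fin d)) (y : Fin n → V) (a b : V)
    (u : EuclideanSpace ℝ (Fin d)) : ℝ :=
  (1 / (((univ.filter fun i => y i = a).card : ℝ) +
        ((univ.filter fun i => y i = b).card : ℝ))) *
    (((univ.filter fun i => y i = a ∧ 0 ≤ (inner ℝ u (h i) : ℝ)).card : ℝ) +
     ((univ.filter fun i => y i = b ∧ (inner ℝ u (h i) : ℝ) < 0).card : ℝ))

/-- The pairwise maximum separability `S*_{a,b} = sup {S_{a,b}(u) | ‖u‖ = 1}`. -/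
noncomputable def sepPairSup {d n : ℕ} {V : Type*} [DecidableEq V]
    (h : Fin n → EuclideanSpace ℝ (Fin d)) (y : Fin n → V) (a b : V) : ℝ :=
  sSup {r : ℝ | ∃ u : EuclideanSpace ℝ (Fin d), ‖u‖ = 1 ∧ sepPair h y a b u = r}

/-- Index `i` with `y i = t k` is correctly classified (ties among the labels
`t 0, …, t (m-1)` broken toward the smaller index): `⟪E (t k), h i⟫ > ⟪E (t j), h i⟫` for
all `j < k`, `⟪E (t k), h i⟫ ≥ ⟪E (t j), h i⟫` for all `j > k`, and
`⟪E (t k), h i⟫ > ⟪E v, h i⟫` for every `v` outside `{t 0, …, t (m-1)}`. -/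
def mcorrect {d n m : ℕ} {V : Type*} (E : V → EuclideanSpace ℝ (Fin d))
    (h : Fin n → EuclideanSpace ℝ (Fin d)) (y : Fin n → V) (t : Fin m → V)
    (i : Fin n) : Prop :=
  ∃ k : Fin m, y i = t k ∧
    (∀ j : Fin m, j < k → (inner ℝ (E (t j)) (h i) : ℝ) < (inner ℝ (E (t k)) (h i) : ℝ)) ∧
    (∀ j : Fin m, k < j → (inner ℝ (E (t j)) (h i) : ℝ) ≤ (inner ℝ (E (t k)) (h i) : ℝ)) ∧
    (∀ v : V, (∀ j : Fin m, v ≠ t j) → (inner ℝ (E v) (h i) : ℝ) < (inner ℝ (E (t k)) (h i) : ℝ))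

noncomputable instance {d n m : ℕ} {V : Type*} [Fintype V] [DecidableEq V]
    (E : V → EuclideanSpace ℝ (Fin d)) (h : Fin n → EuclideanSpace ℝ (Fin d))
    (y : Fin n → V) (t : Fin m → V) : DecidablePred (mcorrect E h y t) := fun i => by
  unfold mcorrect; infer_instance

/-- The multiclass accuracy `Acc = (1/n) · |{i | i is correctly classified}|`. -/
noncomputable def macc {d n m : ℕ} {V : Type*} [Fintype V] [DecidableEq V]
    (E : V → EuclideanSpace ℝ (Fin d)) (h : Fin n → EuclideanSpace ℝ (Fin d))
    (y : Fin n → V) (t : Fin m → V) : ℝ :=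
  (1 / (n : ℝ)) * ((univ.filter fun i => mcorrect E h y t i).card : ℝ)
/-!
Sort the correctly classified points by their label: with `C j` of them in class `j`, summing
`C j + C k` over the pairs `j < k` counts each `C j` exactly `m - 1` times. For a fixed pair
`j < k`, a correct point of class `j` has `⟪E (t j) - E (t k), h i⟫ ≥ 0` and one of class `k`
has it `< 0` (ties are broken toward `j`), so along the unit direction of `E (t j) - E (t k)`
they are all counted by the separability, giving `C j + C k ≤ (|N_j| + |N_k|) · S*_{j,k}`.
-/

open Function

theorem sum_sum_ite_lt_add {ι R : Type*} [Fintype ι] [LinearOrder ι] [CommRing R]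
    (f : ι → R) :
    ∑ j, ∑ k, (if j < k then f j + f k else 0) = ((Fintype.card ι : R) - 1) * ∑ j, f j := by
  have hsplit : ∀ j k : ι, (if j < k then f j + f k else 0) =
      (if j < k then f j else 0) + (if j < k then f k else 0) := by
    intro j k; split_ifs <;> simp
  have hpair : ∀ j k : ι, (if j < k then f j else 0) + (if k < j then f j else 0) =
      f j - if j = k then f j else 0 := by
    intro j k
    rcases lt_trichotomy j k with hjk | rfl | hkj
    · simp [hjk, hjk.not_gt, hjk.ne]
    · simp
    · simp [hkj, hkj.not_gt, hkj.ne']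
  simp only [hsplit, sum_add_distrib]
  rw [sum_comm (f := fun j k => if j < k then f k else 0), ← sum_add_distrib]
  simp only [← sum_add_distrib, hpair, sum_sub_distrib, sum_const, sum_ite_eq, mem_univ,
    if_true, card_univ, nsmul_eq_mul, ← mul_sum]
  ring

theorem card_eq_sum_card_filter_comp_eq {α β ι : Type*} [DecidableEq β] [Fintype ι]
    {s : Finset α} {f : α → β} {t : ι → β} (ht : Injective t) (hs : ∀ a ∈ s, ∃ j, f a = t j) :
    #s = ∑ j, #{a ∈ s | f a = t j} := by
  classical
  rw [card_eq_sum_card_fiberwise (f := f) (t := univ.image t), sum_image fun j _ k _ hjk => ht hjk]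
  intro a ha
  obtain ⟨j, hj⟩ := hs a ha
  exact mem_image.2 ⟨j, mem_univ j, hj.symm⟩

section Separability

variable {d n : ℕ} {V : Type*} [DecidableEq V] (h : Fin n → EuclideanSpace ℝ (Fin d))
  (y : Fin n → V) (a b : V)

theorem card_add_card_le_card_add_card (u : EuclideanSpace ℝ (Fin d)) :
    #{i | y i = a ∧ 0 ≤ inner ℝ u (h i)} + #{i | y i = b ∧ inner ℝ u (h i) < 0} ≤
      #{i | y i = a} + #{i | y i = b} :=
  add_le_add (card_le_card fun i hi => by simp_all) (card_le_card fun i hi => by simp_all)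

theorem card_add_card_mul_sepPair (u : EuclideanSpace ℝ (Fin d)) :
    ((#{i | y i = a} : ℝ) + #{i | y i = b}) * sepPair h y a b u =
      #{i | y i = a ∧ 0 ≤ inner ℝ u (h i)} + #{i | y i = b ∧ inner ℝ u (h i) < 0} := by
  have hAB := card_add_card_le_card_add_card h y a b u
  rw [sepPair, ← mul_assoc]
  by_cases hN : ((#{i | y i = a} : ℝ) + #{i | y i = b}) = 0
  · have hN' : #{i | y i = a} + #{i | y i = b} = 0 := by exact_mod_cast hN
    rw [hN, zero_mul, zero_mul]
    norm_cast
    omega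
  · rw [mul_one_div_cancel hN, one_mul]

theorem sepPair_le_one (u : EuclideanSpace ℝ (Fin d)) : sepPair h y a b u ≤ 1 := by
  have hAB := card_add_card_le_card_add_card h y a b u
  rw [sepPair, one_div_mul_eq_div]
  exact div_le_one_of_le₀ (by exact_mod_cast hAB) (by positivity)

theorem sepPair_le_sepPairSup {u : EuclideanSpace ℝ (Fin d)} (hu : ‖u‖ = 1) :
    sepPair h y a b u ≤ sepPairSup h y a b :=
  le_csSup ⟨1, by rintro _ ⟨v, -, rfl⟩; exact sepPair_le_one h y a b v⟩ ⟨u, hu, rfl⟩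

theorem card_add_card_le_mul_sepPairSup {u : EuclideanSpace ℝ (Fin d)} (hu : ‖u‖ = 1) :
    (#{i | y i = a ∧ 0 ≤ inner ℝ u (h i)} : ℝ) + #{i | y i = b ∧ inner ℝ u (h i) < 0} ≤
      ((#{i | y i = a} : ℝ) + #{i | y i = b}) * sepPairSup h y a b := by
  rw [← card_add_card_mul_sepPair]
  exact mul_le_mul_of_nonneg_left (sepPair_le_sepPairSup h y a b hu) (by positivity)

end Separability

section Classification

variable {d n m : ℕ} {V : Type*} {E : V → EuclideanSpace ℝ (Fin d)}
  {h : Fin n → EuclideanSpace ℝ (Fin d)} {y : Fin n → V} {t : Fin m → V} {i : Fin n} {k : Fin m}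

theorem mcorrect.inner_lt_of_lt (ht : Injective t) (hi : mcorrect E h y t i) (hk : y i = t k)
    {j : Fin m} (hjk : j < k) : inner ℝ (E (t j)) (h i) < inner ℝ (E (t k)) (h i) := by
  obtain ⟨c, hc, hlt, -, -⟩ := hi
  obtain rfl : c = k := ht (hc.symm.trans hk)
  exact hlt j hjk

theorem mcorrect.inner_le_of_lt (ht : Injective t) (hi : mcorrect E h y t i) (hk : y i = t k)
    {j : Fin m} (hkj : k < j) : inner ℝ (E (t j)) (h i) ≤ inner ℝ (E (t k)) (h i) := by
  obtain ⟨c, hc, -, hle, -⟩ := hi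
  obtain rfl : c = k := ht (hc.symm.trans hk)
  exact hle j hkj

variable [Fintype V] [DecidableEq V]

theorem card_mcorrect_eq_sum (ht : Injective t) :
    #{i | mcorrect E h y t i} = ∑ j, #{i | mcorrect E h y t i ∧ y i = t j} := by
  rw [card_eq_sum_card_filter_comp_eq (f := y) ht]
  · simp only [filter_filter]
  rintro i hi
  obtain ⟨k, hk, -⟩ := (mem_filter.1 hi).2
  exact ⟨k, hk⟩

theorem card_mcorrect_add_card_mcorrect_le (ht : Injective t) {j k : Fin m} (hjk : j < k)
    (hE : E (t j) ≠ E (t k)) :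
    (#{i | mcorrect E h y t i ∧ y i = t j} : ℝ) + #{i | mcorrect E h y t i ∧ y i = t k} ≤
      ((#{i | y i = t j} : ℝ) + #{i | y i = t k}) * sepPairSup h y (t j) (t k) := by
  set w := E (t j) - E (t k)
  have hw : w ≠ 0 := sub_ne_zero.2 hE
  have hinner : ∀ i, inner ℝ (‖w‖⁻¹ • w) (h i) =
      ‖w‖⁻¹ * (inner ℝ (E (t j)) (h i) - inner ℝ (E (t k)) (h i)) := fun i => by
    rw [real_inner_smul_left, inner_sub_left]
  have hw_pos : 0 < ‖w‖⁻¹ := inv_pos.2 (norm_pos_iff.2 hw)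
  have hu : ‖‖w‖⁻¹ • w‖ = 1 := by
    rw [norm_smul, norm_inv, norm_norm, inv_mul_cancel₀ (norm_ne_zero_iff.2 hw)]
  refine le_trans (add_le_add ?_ ?_) (card_add_card_le_mul_sepPairSup h y _ _ hu)
  · refine Nat.cast_le.2 (card_le_card fun i hi => ?_)
    simp only [mem_filter, mem_univ, true_and] at hi ⊢
    refine ⟨hi.2, ?_⟩
    rw [hinner]
    exact mul_nonneg hw_pos.le (sub_nonneg.2 (hi.1.inner_le_of_lt ht hi.2 hjk))
  · refine Nat.cast_le.2 (card_le_card fun i hi => ?_)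
    simp only [mem_filter, mem_univ, true_and] at hi ⊢
    refine ⟨hi.2, ?_⟩
    rw [hinner]
    exact mul_neg_of_pos_of_neg hw_pos (sub_neg.2 (hi.1.inner_lt_of_lt ht hi.2 hjk))

end Classification

theorem stmt_8_general {d n m : ℕ} (hm : 2 ≤ m)
    {V : Type*} [Fintype V] [DecidableEq V]
    (E : V → EuclideanSpace ℝ (Fin d))
    (h : Fin n → EuclideanSpace ℝ (Fin d)) (y : Fin n → V)
    (t : Fin m → V) (ht : Function.Injective t)
    (hE : ∀ j k : Fin m, j ≠ k → E (t j) ≠ E (t k)) :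
    macc E h y t ≤
      (1 / ((n : ℝ) * ((m : ℝ) - 1))) *
        ∑ j : Fin m, ∑ k : Fin m,
          if j < k then
            (((univ.filter fun i => y i = t j).card : ℝ) +
             ((univ.filter fun i => y i = t k).card : ℝ)) *
              sepPairSup h y (t j) (t k)
          else 0 := by
  have hm_pos : (0 : ℝ) < (m : ℝ) - 1 := by
    have : (2 : ℝ) ≤ m := by exact_mod_cast hm
    linarith
  have hcount : ((m : ℝ) - 1) * #{i | mcorrect E h y t i} = ∑ j : Fin m, ∑ k : Fin m,
      if j < k then ((#{i | mcorrect E h y t i ∧ y i = t j} : ℝ) +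
        #{i | mcorrect E h y t i ∧ y i = t k}) else 0 := by
    rw [sum_sum_ite_lt_add, card_mcorrect_eq_sum ht, Fintype.card_fin, Nat.cast_sum]
  calc macc E h y t
      = (1 / ((n : ℝ) * ((m : ℝ) - 1))) * (((m : ℝ) - 1) * #{i | mcorrect E h y t i}) := by
        rw [macc]; field_simp
    _ ≤ _ := by
        rw [hcount]
        gcongr with j _ k _
        split_ifs with hjk
        · exact card_mcorrect_add_card_mcorrect_le ht hjk (hE j k hjk.ne)
        · rfl

/-- (Theorem 2, inequality) With pairwise distinct label tokens `t 0, …, t (m-1)` having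
pairwise distinct unembedding vectors, nonempty classes `N_j = {i | y i = t j}` covering
all of `Fin n`, the multiclass accuracy is upper-bounded by the weighted average over all
unordered label pairs of the pairwise maximum separabilities:
`Acc ≤ (1/(n·(m−1))) · Σ_{j < k} (|N_j| + |N_k|) · S*_{j,k}`. -/
theorem stmt_8 {d n m : ℕ} (hd : 1 ≤ d) (hn : 1 ≤ n) (hm : 2 ≤ m)
    {V : Type*} [Fintype V] [DecidableEq V]
    (E : V → EuclideanSpace ℝ (Fin d))
    (h : Fin n → EuclideanSpace ℝ (Fin d)) (y : Fin n → V)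
    (t : Fin m → V) (ht : Function.Injective t)
    (hy : ∀ i : Fin n, ∃ j : Fin m, y i = t j)
    (hne : ∀ j : Fin m, ∃ i : Fin n, y i = t j)
    (hE : ∀ j k : Fin m, j ≠ k → E (t j) ≠ E (t k)) :
    macc E h y t ≤
      (1 / ((n : ℝ) * ((m : ℝ) - 1))) *
        ∑ j : Fin m, ∑ k : Fin m,
          if j < k then
            (((univ.filter fun i => y i = t j).card : ℝ) +
             ((univ.filter fun i => y i = t k).card : ℝ)) *
              sepPairSup h y (t j) (t k)
          else 0 :=
  stmt_8_general hm E h y t ht hE
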